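/- For h, w with |h^H w|² = s and interference-plus-noise power c > 0, the scalar MMSE identity holds: ln(1 + s/c) = max_{W>0, u∈ℂ} ln(W) − W·E(u) + 1, where E(u) = (u*·h^H w − 1)(u*·h^H w − 1)* + |u|²·c, and the maximum is attained at u_opt = h^H w / (s + c) and W_opt = 1/E(u_opt) = 1 + s/c. -/

import Mathlib

open Matrix
/-- The scalar WMMSE variational identity: for fixed `h, w` with `s = |hᴴw|²` and
interference-plus-noise power `c > 0`,
`ln(1 + s/c) = max_{W>0, u∈ℂ} ln W − W·E(u) + 1` with
`E(u) = |u* (hᴴw) − 1|² + |u|² c`, and the maximum is attained at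
`u_opt = hᴴw/(s+c)` and `W_opt = 1/E(u_opt) = 1 + s/c`. -/
theorem wmmse_scalar_identity (N : ℕ) (h w : Fin N → ℂ) (c : ℝ) (hc : 0 < c)
    (a : ℂ) (ha : a = star h ⬝ᵥ w)
    (s : ℝ) (hs : s = Complex.normSq a)
    (E : ℂ → ℝ)
    (hE : ∀ u : ℂ, E u = Complex.normSq ((starRingEnd ℂ) u * a - 1) + Complex.normSq u * c)
    (u_opt : ℂ) (hu : u_opt = a / ((s : ℂ) + (c : ℂ)))
    (W_opt : ℝ) (hW : W_opt = 1 + s / c) :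
    IsGreatest {y : ℝ | ∃ W : ℝ, 0 < W ∧ ∃ u : ℂ, y = Real.log W - W * E u + 1}
        (Real.log (1 + s / c)) ∧
      W_opt = 1 / E u_opt ∧ 0 < W_opt ∧
      Real.log W_opt - W_opt * E u_opt + 1 = Real.log (1 + s / c) := by
  have hs0 : 0 ≤ s := hs ▸ Complex.normSq_nonneg a
  have hd : 0 < s + c := by linarith
  -- compute E u_opt
  have hEopt : E u_opt = c / (s + c) := by
    rw [hE, hu]
    have hdc : ((s : ℂ) + (c : ℂ)) = ((s + c : ℝ) : ℂ) := by push_cast; ring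
    rw [hdc]
    rw [map_div₀, Complex.conj_ofReal]
    have h1 : (starRingEnd ℂ) a / ((s + c : ℝ) : ℂ) * a = ((s : ℝ) : ℂ) / ((s + c : ℝ) : ℂ) := by
      rw [div_mul_eq_mul_div, ← Complex.normSq_eq_conj_mul_self, ← hs]
    rw [h1]
    have hne : ((s + c : ℝ) : ℂ) ≠ 0 := by
      exact_mod_cast Complex.ofReal_ne_zero.mpr (ne_of_gt hd)
    have h2 : ((s : ℝ) : ℂ) / ((s + c : ℝ) : ℂ) - 1 = ((-c : ℝ) : ℂ) / ((s + c : ℝ) : ℂ) := by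
      rw [div_sub_one hne]
      congr 1
      push_cast
      ring
    rw [h2, Complex.normSq_div, Complex.normSq_div, Complex.normSq_ofReal,
      Complex.normSq_ofReal, ← hs]
    field_simp
    ring
  have hEpos : 0 < c / (s + c) := div_pos hc hd
  -- lower bound on E
  have hElb : ∀ u : ℂ, c / (s + c) ≤ E u := by
    intro u
    rw [hE]
    rw [div_le_iff₀ hd]
    have e1 : Complex.normSq ((starRingEnd ℂ) u * a - 1) =
        Complex.normSq u * s - 2 * (u.re * a.re + u.im * a.im) + 1 := by
      rw [hs]
      simp [Complex.normSq_apply, Complex.mul_re, Complex.mul_im]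
      ring
    rw [e1]
    have h2 := sq_nonneg (u.re * (s + c) - a.re)
    have h3 := sq_nonneg (u.im * (s + c) - a.im)
    have hsq : a.re ^ 2 + a.im ^ 2 = s := by
      rw [hs, Complex.normSq_apply]; ring
    have hnsq : Complex.normSq u = u.re ^ 2 + u.im ^ 2 := by
      rw [Complex.normSq_apply]; ring
    rw [hnsq]
    nlinarith [sq_nonneg (s + c), hd]
  have hlog : Real.log W_opt - W_opt * E u_opt + 1 = Real.log (1 + s / c) := by
    rw [hW, hEopt]
    have : (1 + s / c) * (c / (s + c)) = 1 := by field_simp; ring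
    rw [this]
    ring
  refine ⟨⟨⟨W_opt, by rw [hW]; positivity, u_opt, hlog.symm⟩, ?_⟩, ?_, by rw [hW]; positivity, hlog⟩
  · rintro y ⟨W, hWpos, u, rfl⟩
    have key : Real.log (W * (c / (s + c))) ≤ W * (c / (s + c)) - 1 :=
      Real.log_le_sub_one_of_pos (mul_pos hWpos hEpos)
    rw [Real.log_mul (ne_of_gt hWpos) (ne_of_gt hEpos)] at key
    have hlogdiv : Real.log (c / (s + c)) = - Real.log (1 + s / c) := by
      rw [← Real.log_inv]
      congr 1
      field_simp
      ring
    rw [hlogdiv] at key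
    have hEW : W * (c / (s + c)) ≤ W * E u := by
      exact mul_le_mul_of_nonneg_left (hElb u) (le_of_lt hWpos)
    linarith
  · rw [hW, hEopt]
    field_simp
    ring
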